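/- Let ξ = (ξ₁, ξ₂, ξ₃) ∈ ℝ³ with ξ₁ ≠ 0. Then the linear span in ℝ⁶ of the four vectors p₁(|ξ|, ξ), p₂(|ξ|, ξ), p₁(−|ξ|, ξ), p₂(−|ξ|, ξ) equals the subspace { (a, b) ∈ ℝ³×ℝ³ : ξ·a = 0 and ξ·b = 0 }, i.e., the image of the matrix P(ξ) equals the kernel of the matrix R(ξ). -/

import Mathlib

open MeasureTheory Real Set

noncomputable section

/-- Partial derivative of a scalar function on ℝ⁴ in the `i`-th coordinate
(coordinates are `(t,x,y,z)`). -/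
def pd4 (i : Fin 4) (f : (Fin 4 → ℝ) → ℝ) : (Fin 4 → ℝ) → ℝ :=
  fun x => fderiv ℝ f x (Pi.single i 1)

/-- Partial derivative of a scalar function on ℝ³ in the `i`-th coordinate. -/
def pd3 (i : Fin 3) (f : (Fin 3 → ℝ) → ℝ) : (Fin 3 → ℝ) → ℝ :=
  fun x => fderiv ℝ f x (Pi.single i 1)

/-- Multi-index derivative `∂^α` on ℝ⁴. -/
def mderiv4 (α : Fin 4 → ℕ) (f : (Fin 4 → ℝ) → ℝ) : (Fin 4 → ℝ) → ℝ :=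
  (pd4 0)^[α 0] ((pd4 1)^[α 1] ((pd4 2)^[α 2] ((pd4 3)^[α 3] f)))

/-- Multi-index derivative `∂^α` on ℝ³. -/
def mderiv3 (α : Fin 3 → ℕ) (f : (Fin 3 → ℝ) → ℝ) : (Fin 3 → ℝ) → ℝ :=
  (pd3 0)^[α 0] ((pd3 1)^[α 1] ((pd3 2)^[α 2] f))

/-- Purely spatial multi-index derivative `∂^α_x` of a function on ℝ⁴. -/
def mderivSp (α : Fin 3 → ℕ) (f : (Fin 4 → ℝ) → ℝ) : (Fin 4 → ℝ) → ℝ :=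
  (pd4 1)^[α 0] ((pd4 2)^[α 1] ((pd4 3)^[α 2] f))

/-- Spatial curl of a time-dependent vector field on ℝ⁴. -/
def scurl (F : (Fin 4 → ℝ) → Fin 3 → ℝ) (x : Fin 4 → ℝ) : Fin 3 → ℝ :=
  ![pd4 2 (fun y => F y 2) x - pd4 3 (fun y => F y 1) x,
    pd4 3 (fun y => F y 0) x - pd4 1 (fun y => F y 2) x,
    pd4 1 (fun y => F y 1) x - pd4 2 (fun y => F y 0) x]

/-- Spatial divergence of a time-dependent vector field on ℝ⁴. -/
def sdiv (F : (Fin 4 → ℝ) → Fin 3 → ℝ) (x : Fin 4 → ℝ) : ℝ :=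
  pd4 1 (fun y => F y 0) x + pd4 2 (fun y => F y 1) x + pd4 3 (fun y => F y 2) x

/-- Divergence of a vector field on ℝ³. -/
def div3 (F : (Fin 3 → ℝ) → Fin 3 → ℝ) (x : Fin 3 → ℝ) : ℝ :=
  pd3 0 (fun y => F y 0) x + pd3 1 (fun y => F y 1) x + pd3 2 (fun y => F y 2) x

/-- Spatial Laplacian of a scalar function on ℝ⁴. -/
def lap4 (f : (Fin 4 → ℝ) → ℝ) : (Fin 4 → ℝ) → ℝ :=
  fun x => pd4 1 (pd4 1 f) x + pd4 2 (pd4 2 f) x + pd4 3 (pd4 3 f) x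

/-- Euclidean norm on ℝ³ (as `Fin 3 → ℝ`). -/
def enorm3 (v : Fin 3 → ℝ) : ℝ := Real.sqrt (v 0 ^ 2 + v 1 ^ 2 + v 2 ^ 2)

/-- Cross product on ℝ³. -/
def cross3 (u v : Fin 3 → ℝ) : Fin 3 → ℝ :=
  ![u 1 * v 2 - u 2 * v 1, u 2 * v 0 - u 0 * v 2, u 0 * v 1 - u 1 * v 0]

/-- The E-part (first three components) of a vector in ℝ⁶. -/
def epart (v : Fin 6 → ℝ) : Fin 3 → ℝ := fun m => v (Fin.castLE (by norm_num) m)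

/-- The B-part (last three components) of a vector in ℝ⁶. -/
def bpart (v : Fin 6 → ℝ) : Fin 3 → ℝ := fun m => v (m.addNat 3)

/-- First Noetherian multiplier `p₁`. -/
def p1NM (z : Fin 4 → ℝ) : Fin 6 → ℝ :=
  ![-(z 1 * z 3), -(z 2 * z 3), z 0 ^ 2 - z 3 ^ 2, -(z 0 * z 2), z 0 * z 1, 0]

/-- Second Noetherian multiplier `p₂`. -/
def p2NM (z : Fin 4 → ℝ) : Fin 6 → ℝ :=
  ![z 1 * z 2, -(z 0 ^ 2) + z 2 ^ 2, z 2 * z 3, -(z 0 * z 3), 0, z 0 * z 1]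

/-- The family of both Noetherian multipliers. -/
def pNM : Fin 2 → (Fin 4 → ℝ) → Fin 6 → ℝ := ![p1NM, p2NM]

/-- Signs `+1, -1` indexed by `Fin 2`. -/
def sgn2 : Fin 2 → ℝ := ![1, -1]

/-- The full spacetime frequency `z = (j·√(ζ₁²+ζ₂²+ζ₃²), ζ)` built from a sign
index `j` and a spatial frequency `ζ`. -/
def freq (j : Fin 2) (ζ : Fin 3 → ℝ) : Fin 4 → ℝ :=
  Matrix.vecCons (sgn2 j * enorm3 ζ) ζ

/-- The ℝ⁶-valued output of a FLASH-MAX network of width `W` with activation `σ`,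
weights `w`, biases `b` and spatial frequencies `ζ`. -/
def flashOut (σ : ℝ → ℝ) (W : ℕ) (w b : Fin 2 → Fin 2 → Fin W → ℝ)
    (ζ : Fin 2 → Fin 2 → Fin W → Fin 3 → ℝ) (x : Fin 4 → ℝ) : Fin 6 → ℝ :=
  fun l => ∑ i : Fin 2, ∑ j : Fin 2, ∑ k : Fin W,
    w i j k * σ ((∑ m : Fin 4, x m * freq j (ζ i j k) m) + b i j k)
      * pNM i (freq j (ζ i j k)) l

/-- `(E, B)` is a FLASH-MAX network of some finite width with activation `σ`. -/
def IsFlashMax (σ : ℝ → ℝ) (E B : (Fin 4 → ℝ) → Fin 3 → ℝ) : Prop :=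
  ∃ (W : ℕ) (w b : Fin 2 → Fin 2 → Fin W → ℝ)
    (ζ : Fin 2 → Fin 2 → Fin W → Fin 3 → ℝ),
    ∀ x : Fin 4 → ℝ,
      E x = epart (flashOut σ W w b ζ x) ∧ B x = bpart (flashOut σ W w b ζ x)

/-- The spatial part of a point of ℝ⁴. -/
def spatial (x : Fin 4 → ℝ) : Fin 3 → ℝ := fun m => x m.succ

/-- The spacetime point `(t, y)` of ℝ⁴. -/
def emb0 (t : ℝ) (y : Fin 3 → ℝ) : Fin 4 → ℝ := Matrix.vecCons t y

/-- The spacetime cylinder `(t₁,t₂) × Ω`. -/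
def slab (t₁ t₂ : ℝ) (Ω : Set (Fin 3 → ℝ)) : Set (Fin 4 → ℝ) :=
  {x | x 0 ∈ Set.Ioo t₁ t₂ ∧ spatial x ∈ Ω}

/-- `σ` is not (the evaluation of) a polynomial. -/
def NotPolynomial (σ : ℝ → ℝ) : Prop :=
  ¬ ∃ p : Polynomial ℝ, ∀ x : ℝ, σ x = p.eval x

/-- Classical homogeneous Maxwell equations at a point. -/
def MaxwellAt (E B : (Fin 4 → ℝ) → Fin 3 → ℝ) (x : Fin 4 → ℝ) : Prop :=
  (∀ c : Fin 3, pd4 0 (fun y => E y c) x - scurl B x c = 0) ∧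
  (∀ c : Fin 3, pd4 0 (fun y => B y c) x + scurl E x c = 0) ∧
  sdiv E x = 0 ∧ sdiv B x = 0

/-- `(E, B)` is a distributional solution of the homogeneous Maxwell equations
on ℝ⁴. -/
def IsDistribMaxwell (E B : (Fin 4 → ℝ) → Fin 3 → ℝ) : Prop :=
  (∀ φ : (Fin 4 → ℝ) → Fin 3 → ℝ, ContDiff ℝ (⊤ : ℕ∞) φ → HasCompactSupport φ →
      ∫ x : Fin 4 → ℝ,
        ((∑ c : Fin 3, E x c * pd4 0 (fun y => φ y c) x) +
          ∑ c : Fin 3, B x c * scurl φ x c) = 0) ∧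
  (∀ φ : (Fin 4 → ℝ) → Fin 3 → ℝ, ContDiff ℝ (⊤ : ℕ∞) φ → HasCompactSupport φ →
      ∫ x : Fin 4 → ℝ,
        ((∑ c : Fin 3, B x c * pd4 0 (fun y => φ y c) x) -
          ∑ c : Fin 3, E x c * scurl φ x c) = 0) ∧
  (∀ ψ : (Fin 4 → ℝ) → ℝ, ContDiff ℝ (⊤ : ℕ∞) ψ → HasCompactSupport ψ →
      ∫ x : Fin 4 → ℝ, ∑ c : Fin 3, E x c * pd4 c.succ ψ x = 0) ∧
  (∀ ψ : (Fin 4 → ℝ) → ℝ, ContDiff ℝ (⊤ : ℕ∞) ψ → HasCompactSupport ψ →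
      ∫ x : Fin 4 → ℝ, ∑ c : Fin 3, B x c * pd4 c.succ ψ x = 0)

/-- `g` is the weak derivative `∂^α u` (of scalar functions on ℝ⁴). -/
def IsWeakDeriv (α : Fin 4 → ℕ) (u g : (Fin 4 → ℝ) → ℝ) : Prop :=
  ∀ φ : (Fin 4 → ℝ) → ℝ, ContDiff ℝ (⊤ : ℕ∞) φ → HasCompactSupport φ →
    ∫ x : Fin 4 → ℝ, u x * mderiv4 α φ x =
      (-1 : ℝ) ^ (∑ i, α i) * ∫ x : Fin 4 → ℝ, g x * φ x

/-- The `2 × 6` matrix `R(ξ)`. -/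
def Rmat (ξ : Fin 3 → ℝ) : Matrix (Fin 2) (Fin 6) ℝ :=
  Matrix.of ![![ξ 0, ξ 1, ξ 2, 0, 0, 0], ![0, 0, 0, ξ 0, ξ 1, ξ 2]]

/-- The `6 × 4` matrix `P(ξ)` with columns `p₁(|ξ|,ξ), p₂(|ξ|,ξ), p₁(−|ξ|,ξ), p₂(−|ξ|,ξ)`. -/
def Pmat (ξ : Fin 3 → ℝ) : Matrix (Fin 6) (Fin 4) ℝ :=
  Matrix.of fun l c =>
    ![p1NM (Matrix.vecCons (enorm3 ξ) ξ), p2NM (Matrix.vecCons (enorm3 ξ) ξ),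
      p1NM (Matrix.vecCons (-enorm3 ξ) ξ), p2NM (Matrix.vecCons (-enorm3 ξ) ξ)] c l

private lemma enorm3_sq' (ξ : Fin 3 → ℝ) : enorm3 ξ ^ 2 = ξ 0 ^ 2 + ξ 1 ^ 2 + ξ 2 ^ 2 :=
  Real.sq_sqrt (by positivity)

private lemma cval4 (a b c d e f : ℝ) : (![a,b,c,d,e,f] : Fin 6 → ℝ) 4 = e := rfl
private lemma cval5 (a b c d e f : ℝ) : (![a,b,c,d,e,f] : Fin 6 → ℝ) 5 = f := rfl

/-- Explicit coefficients expressing `(ξ₀² |ξ|²) • u` in the span of the four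
Noetherian multiplier vectors. -/
def eCoef (ξ : Fin 3 → ℝ) (u : Fin 6 → ℝ) : Fin 4 → ℝ :=
  ![((u 1 * (ξ 1 * ξ 2) + u 2 * (ξ 0 ^ 2 + ξ 2 ^ 2)) + u 4 * ξ 0 * enorm3 ξ) / 2,
    ((-(ξ 1 * ξ 2) * u 2 - (ξ 0 ^ 2 + ξ 1 ^ 2) * u 1) + u 5 * ξ 0 * enorm3 ξ) / 2,
    ((u 1 * (ξ 1 * ξ 2) + u 2 * (ξ 0 ^ 2 + ξ 2 ^ 2)) - u 4 * ξ 0 * enorm3 ξ) / 2,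
    ((-(ξ 1 * ξ 2) * u 2 - (ξ 0 ^ 2 + ξ 1 ^ 2) * u 1) - u 5 * ξ 0 * enorm3 ξ) / 2]

private lemma keyCombo (ξ : Fin 3 → ℝ) (u : Fin 6 → ℝ)
    (hE : ξ 0 * u 0 + ξ 1 * u 1 + ξ 2 * u 2 = 0)
    (hB : ξ 0 * u 3 + ξ 1 * u 4 + ξ 2 * u 5 = 0) :
    (ξ 0 ^ 2 * enorm3 ξ ^ 2) • u =
      eCoef ξ u 0 • p1NM (Matrix.vecCons (enorm3 ξ) ξ) +
      eCoef ξ u 1 • p2NM (Matrix.vecCons (enorm3 ξ) ξ) +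
      eCoef ξ u 2 • p1NM (Matrix.vecCons (-enorm3 ξ) ξ) +
      eCoef ξ u 3 • p2NM (Matrix.vecCons (-enorm3 ξ) ξ) := by
  have hs2 := enorm3_sq' ξ
  set s := enorm3 ξ with hsdef
  have e0 : ∀ a : ℝ, Matrix.vecCons a ξ 0 = a := fun a => rfl
  have e1 : ∀ a : ℝ, Matrix.vecCons a ξ 1 = ξ 0 := fun a => rfl
  have e2 : ∀ a : ℝ, Matrix.vecCons a ξ 2 = ξ 1 := fun a => rfl
  have e3 : ∀ a : ℝ, Matrix.vecCons a ξ 3 = ξ 2 := fun a => rfl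
  funext l
  fin_cases l <;>
    simp [Pi.smul_apply, Pi.add_apply, smul_eq_mul, p1NM, p2NM, eCoef,
      e0, e1, e2, e3, cval4, cval5, Matrix.cons_val_succ]
  · linear_combination (ξ 0 * s ^ 2) * hE - (ξ 0 * (ξ 1 * u 1 + ξ 2 * u 2)) * hs2
  · linear_combination (ξ 0 ^ 2 * u 1 + (-(ξ 1 * ξ 2 * u 2) - (ξ 0 ^ 2 + ξ 1 ^ 2) * u 1)) * hs2
  · linear_combination (ξ 0 ^ 2 * u 2 - (u 1 * (ξ 1 * ξ 2) + u 2 * (ξ 0 ^ 2 + ξ 2 ^ 2))) * hs2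
  · linear_combination (ξ 0 * s ^ 2) * hB
  · ring
  · ring

/-- for `ξ₁ ≠ 0`, the span of the four columns of `P(ξ)` is
exactly `{(a,b) : ξ·a = 0 ∧ ξ·b = 0}`, i.e. `im P(ξ) = ker R(ξ)`. -/
theorem Pmat_image_eq_Rmat_kernel (ξ : Fin 3 → ℝ) (hξ : ξ 0 ≠ 0) :
    ((Submodule.span ℝ
        {p1NM (Matrix.vecCons (enorm3 ξ) ξ), p2NM (Matrix.vecCons (enorm3 ξ) ξ),
         p1NM (Matrix.vecCons (-enorm3 ξ) ξ), p2NM (Matrix.vecCons (-enorm3 ξ) ξ)} :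
          Submodule ℝ (Fin 6 → ℝ)) : Set (Fin 6 → ℝ)) =
      {u : Fin 6 → ℝ | (∑ c : Fin 3, ξ c * epart u c = 0) ∧
        (∑ c : Fin 3, ξ c * bpart u c = 0)} ∧
    {u : Fin 6 → ℝ | ∃ v : Fin 4 → ℝ, (Pmat ξ).mulVec v = u} =
      {u : Fin 6 → ℝ | (Rmat ξ).mulVec u = 0} := by
  have hs2 := enorm3_sq' ξ
  set s := enorm3 ξ with hsdef
  have h0 : (0 : ℝ) < ξ 0 ^ 2 := by positivity
  have hspos : (0 : ℝ) < s ^ 2 := by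
    rw [hs2]; nlinarith [sq_nonneg (ξ 1), sq_nonneg (ξ 2)]
  have hD : ξ 0 ^ 2 * s ^ 2 ≠ 0 := ne_of_gt (mul_pos h0 hspos)
  have hcondE : ∀ u : Fin 6 → ℝ,
      (∑ c : Fin 3, ξ c * epart u c) = ξ 0 * u 0 + ξ 1 * u 1 + ξ 2 * u 2 := by
    intro u; rw [Fin.sum_univ_three]; rfl
  have hcondB : ∀ u : Fin 6 → ℝ,
      (∑ c : Fin 3, ξ c * bpart u c) = ξ 0 * u 3 + ξ 1 * u 4 + ξ 2 * u 5 := by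
    intro u; rw [Fin.sum_univ_three]; rfl
  have hker : ∀ u : Fin 6 → ℝ, (Rmat ξ).mulVec u = 0 ↔
      (ξ 0 * u 0 + ξ 1 * u 1 + ξ 2 * u 2 = 0 ∧ ξ 0 * u 3 + ξ 1 * u 4 + ξ 2 * u 5 = 0) := by
    intro u
    constructor
    · intro h
      constructor
      · have := congrFun h 0
        simpa [Rmat, Matrix.mulVec, dotProduct, Fin.sum_univ_six, cval4, cval5] using this
      · have := congrFun h 1
        simpa [Rmat, Matrix.mulVec, dotProduct, Fin.sum_univ_six, cval4, cval5] using this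
    · rintro ⟨h1, h2⟩
      funext i
      fin_cases i
      · simpa [Rmat, Matrix.mulVec, dotProduct, Fin.sum_univ_six, cval4, cval5] using h1
      · simpa [Rmat, Matrix.mulVec, dotProduct, Fin.sum_univ_six, cval4, cval5] using h2
  have hgen : ∀ w ∈ ({p1NM (Matrix.vecCons s ξ), p2NM (Matrix.vecCons s ξ),
      p1NM (Matrix.vecCons (-s) ξ), p2NM (Matrix.vecCons (-s) ξ)} : Set (Fin 6 → ℝ)),
      ξ 0 * w 0 + ξ 1 * w 1 + ξ 2 * w 2 = 0 ∧ ξ 0 * w 3 + ξ 1 * w 4 + ξ 2 * w 5 = 0 := by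
    intro w hw
    simp only [Set.mem_insert_iff, Set.mem_singleton_iff] at hw
    have e0 : ∀ a : ℝ, Matrix.vecCons a ξ 0 = a := fun a => rfl
    have e1 : ∀ a : ℝ, Matrix.vecCons a ξ 1 = ξ 0 := fun a => rfl
    have e2 : ∀ a : ℝ, Matrix.vecCons a ξ 2 = ξ 1 := fun a => rfl
    have e3 : ∀ a : ℝ, Matrix.vecCons a ξ 3 = ξ 2 := fun a => rfl
    rcases hw with rfl | rfl | rfl | rfl <;>
      constructor <;>
      simp [p1NM, p2NM, e0, e1, e2, e3, cval4, cval5, Matrix.cons_val_succ]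
    · linear_combination ξ 2 * hs2
    · ring
    · linear_combination (-(ξ 1)) * hs2
    · ring
    · linear_combination ξ 2 * hs2
    · ring
    · linear_combination (-(ξ 1)) * hs2
    · ring
  constructor
  · ext u
    simp only [SetLike.mem_coe, Set.mem_setOf_eq, hcondE u, hcondB u]
    constructor
    · intro hu
      have hmem : u ∈ LinearMap.ker ((Rmat ξ).mulVecLin) := by
        refine Submodule.span_le.mpr ?_ hu
        intro w hw
        simp only [SetLike.mem_coe, LinearMap.mem_ker, Matrix.mulVecLin_apply]
        exact (hker w).mpr (hgen w hw)
      have : (Rmat ξ).mulVec u = 0 := by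
        simpa [Matrix.mulVecLin_apply] using hmem
      exact (hker u).mp this
    · rintro ⟨h1, h2⟩
      have key := keyCombo ξ u h1 h2
      have hu : u = (ξ 0 ^ 2 * s ^ 2)⁻¹ • ((ξ 0 ^ 2 * s ^ 2) • u) := by
        rw [smul_smul, inv_mul_cancel₀ hD, one_smul]
      rw [hu, key]
      refine Submodule.smul_mem _ _ (Submodule.add_mem _ (Submodule.add_mem _
        (Submodule.add_mem _ ?_ ?_) ?_) ?_) <;>
        exact Submodule.smul_mem _ _ (Submodule.subset_span (by simp [hsdef]))
  · ext u
    simp only [Set.mem_setOf_eq]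
    rw [hker u]
    constructor
    · rintro ⟨v, rfl⟩
      have e0 : ∀ a : ℝ, Matrix.vecCons a ξ 0 = a := fun a => rfl
      have e1 : ∀ a : ℝ, Matrix.vecCons a ξ 1 = ξ 0 := fun a => rfl
      have e2 : ∀ a : ℝ, Matrix.vecCons a ξ 2 = ξ 1 := fun a => rfl
      have e3 : ∀ a : ℝ, Matrix.vecCons a ξ 3 = ξ 2 := fun a => rfl
      constructor <;>
        simp [Pmat, Matrix.mulVec, dotProduct, Fin.sum_univ_four, Matrix.of_apply,
          p1NM, p2NM, e0, e1, e2, e3, cval4, cval5, Matrix.cons_val_succ]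
      · linear_combination ((v 0 + v 2) * ξ 2 - (v 1 + v 3) * ξ 1) * hs2
      · ring
    · rintro ⟨h1, h2⟩
      have key := keyCombo ξ u h1 h2
      refine ⟨![(ξ 0 ^ 2 * s ^ 2)⁻¹ * eCoef ξ u 0, (ξ 0 ^ 2 * s ^ 2)⁻¹ * eCoef ξ u 1,
        (ξ 0 ^ 2 * s ^ 2)⁻¹ * eCoef ξ u 2, (ξ 0 ^ 2 * s ^ 2)⁻¹ * eCoef ξ u 3], ?_⟩
      funext l
      have hl := congrFun key l
      simp only [Pi.smul_apply, Pi.add_apply, smul_eq_mul] at hl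
      simp [Pmat, Matrix.mulVec, dotProduct, Fin.sum_univ_four, Matrix.of_apply,
        cval4, cval5, Matrix.cons_val_succ]
      rw [← hsdef] at hl
      simp only [← hsdef]
      field_simp
      rw [div_eq_iff (ne_of_gt hspos)]
      linarith [hl]

end
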